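/- Let L₁, L₂ be two distinct complex lines through the origin in C^n, n ≥ 3, and let G₁, G₂ ⊆ SU(n) be the subgroups fixing L₁ resp. L₂ pointwise-invariantly (i.e., the complex rotation groups around the axes L₁ and L₂, each conjugate to SU(n−1)). Then any compact subgroup G of SU(n) containing both G₁ and G₂ acts transitively on the unit sphere S^{2n−1} ⊆ C^n. -/

import Mathlib

open Metric Submodule

noncomputable section

abbrev Cn (n : ℕ) := EuclideanSpace ℂ (Fin n)

/-- The complex rotation group around the axis `L`: elements of `SU(n)`
(unitary matrices of determinant 1) fixing `L` pointwise. -/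
def rotGroup {n : ℕ} (L : Submodule ℂ (Cn n)) :
    Set (Matrix.unitaryGroup (Fin n) ℂ) :=
  {g | (g : Matrix (Fin n) (Fin n) ℂ).det = 1 ∧
    ∀ x : Cn n, x ∈ L → (WithLp.toLp 2 (Matrix.mulVec (g : Matrix (Fin n) (Fin n) ℂ) x) : Cn n) = x}

/-!
Write `L₁ = ℂ e`, `L₂ = ℂ f` with unit vectors `e`, `f`, so that `‖⟪e, f⟫‖ < 1`. Since `n ≥ 3`,
the rotation group around `e` acts transitively on each level set `{z ∈ S : ⟪e, z⟫ = a}` of the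
sphere `S`. By compactness, `g ↦ re ⟪e, g x⟫` attains its maximum on `G` at some `z₀ = g₀ x`. If
`z₀ ≠ e`, one rotation around `e` followed by one around `f` strictly increases `re ⟪e, ·⟫`:
first make `z₀` orthogonal to `f` apart from its `e`-component (this uses a third dimension),
then, keeping `⟪f, ·⟫` fixed, turn its component orthogonal to `f` as far as possible towards `e`.
Hence every orbit of `G` on `S` contains `e`.
-/

open Module RCLike
open scoped InnerProductSpace ComplexConjugate

namespace Matrix.UnitaryGroup

variable {ι 𝕜 : Type*} [Fintype ι] [DecidableEq ι] [RCLike 𝕜]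

def toLinearIsometryEquiv :
    unitaryGroup ι 𝕜 →* (EuclideanSpace 𝕜 ι ≃ₗᵢ[𝕜] EuclideanSpace 𝕜 ι) where
  toFun g := Unitary.linearIsometryEquiv
    ⟨toEuclideanCLM (n := ι) (𝕜 := 𝕜) g, Unitary.map_mem (toEuclideanCLM (n := ι) (𝕜 := 𝕜)) g.2⟩
  map_one' := by ext x : 1; exact congrArg (WithLp.toLp 2) (one_mulVec _)
  map_mul' g h := by ext x : 1; exact congrArg (WithLp.toLp 2) (mulVec_mulVec _ _ _).symm

theorem toLinearIsometryEquiv_apply (g : unitaryGroup ι 𝕜) (x : EuclideanSpace 𝕜 ι) :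
    toLinearIsometryEquiv g x = WithLp.toLp 2 ((g : Matrix ι ι 𝕜) *ᵥ x) :=
  rfl

def detHom : unitaryGroup ι 𝕜 →* unitary 𝕜 where
  toFun g := ⟨(g : Matrix ι ι 𝕜).det, det_of_mem_unitary g.2⟩
  map_one' := Subtype.ext (det_one (n := ι) (R := 𝕜))
  map_mul' g h := Subtype.ext (det_mul g.1 h.1)

def ofOrthonormalBasis (b : OrthonormalBasis ι 𝕜 (EuclideanSpace 𝕜 ι)) : unitaryGroup ι 𝕜 :=
  ⟨(EuclideanSpace.basisFun ι 𝕜).toBasis.toMatrix b,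
    (EuclideanSpace.basisFun ι 𝕜).toMatrix_orthonormalBasis_mem_unitary b⟩

theorem toLinearIsometryEquiv_ofOrthonormalBasis_single
    (b : OrthonormalBasis ι 𝕜 (EuclideanSpace 𝕜 ι)) (i : ι) :
    toLinearIsometryEquiv (ofOrthonormalBasis b) (EuclideanSpace.single i 1) = b i := by
  ext j
  simp [toLinearIsometryEquiv_apply, ofOrthonormalBasis, Module.Basis.toMatrix_apply]

def diagonalUnitary (d : ι → unitary 𝕜) : unitaryGroup ι 𝕜 :=
  ⟨diagonal fun i => (d i : 𝕜), by
    rw [mem_unitaryGroup_iff', star_eq_conjTranspose, diagonal_conjTranspose,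
      diagonal_mul_diagonal, ← diagonal_one]
    exact congrArg diagonal (funext fun i => Unitary.star_mul_self_of_mem (d i).2)⟩

theorem detHom_diagonalUnitary (d : ι → unitary 𝕜) : detHom (diagonalUnitary d) = ∏ i, d i := by
  ext
  simp [detHom, diagonalUnitary, det_diagonal]

theorem toLinearIsometryEquiv_diagonalUnitary_single (d : ι → unitary 𝕜) (i : ι) :
    toLinearIsometryEquiv (diagonalUnitary d) (EuclideanSpace.single i 1) =
      (d i : 𝕜) • EuclideanSpace.single i 1 := by
  ext j
  simp [toLinearIsometryEquiv_apply, diagonalUnitary]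

theorem exists_detHom_eq_one_apply_eq (b₁ b₂ : OrthonormalBasis ι 𝕜 (EuclideanSpace 𝕜 ι))
    (k : ι) : ∃ g : unitaryGroup ι 𝕜, detHom g = 1 ∧
      ∀ i ≠ k, toLinearIsometryEquiv g (b₁ i) = b₂ i := by
  let P₁ := ofOrthonormalBasis b₁
  let P₂ := ofOrthonormalBasis b₂
  -- `D` corrects the determinant of `P₂ * P₁⁻¹` by a phase on the `k`-th axis.
  let D := diagonalUnitary (Function.update (1 : ι → unitary 𝕜) k (detHom P₁ * (detHom P₂)⁻¹))
  refine ⟨P₂ * D * P₁⁻¹, ?_, fun i hi => ?_⟩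
  · simp [D, detHom_diagonalUnitary, Finset.prod_update_of_mem]
  · have h₁ : (toLinearIsometryEquiv P₁).symm (b₁ i) = EuclideanSpace.single i 1 :=
      (LinearIsometryEquiv.symm_apply_eq _).2
        (toLinearIsometryEquiv_ofOrthonormalBasis_single b₁ i).symm
    simp [h₁, D, P₂, toLinearIsometryEquiv_diagonalUnitary_single, hi,
      toLinearIsometryEquiv_ofOrthonormalBasis_single]

end Matrix.UnitaryGroup

section InnerProductSpace

variable {𝕜 E : Type*} [RCLike 𝕜] [NormedAddCommGroup E] [InnerProductSpace 𝕜 E]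

theorem Orthonormal.exists_orthonormalBasis_apply_eq_apply_eq [FiniteDimensional 𝕜 E]
    {ι : Type*} [Fintype ι] (hE : finrank 𝕜 E = Fintype.card ι) {i j : ι} (hij : i ≠ j)
    {x y : E} (hxy : Orthonormal 𝕜 ![x, y]) :
    ∃ b : OrthonormalBasis ι 𝕜 E, b i = x ∧ b j = y := by
  classical
  let v : ι → E := fun k => if k = i then x else y
  let f : ({i, j} : Set ι) → Fin 2 := fun k => if (k : ι) = i then 0 else 1
  have hf : f.Injective := by
    rintro ⟨k, rfl | rfl⟩ ⟨l, rfl | rfl⟩ <;> simp_all [f]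
  have hv : Orthonormal 𝕜 (Set.domRestrict {i, j} v) := by
    convert hxy.comp f hf using 1
    funext k
    by_cases hk : (k : ι) = i <;> simp [v, f, hk]
  obtain ⟨b, hb⟩ := hv.exists_orthonormalBasis_extension_of_card_eq hE
  exact ⟨b, by simpa [v] using hb i (by simp), by simpa [v, hij.symm] using hb j (by simp)⟩

theorem exists_norm_eq_one_eq_span_singleton {L : Submodule 𝕜 E} (hL : finrank 𝕜 L = 1) :
    ∃ e : E, ‖e‖ = 1 ∧ L = 𝕜 ∙ e := by
  have hL₀ : L ≠ ⊥ := by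
    rintro rfl
    simp at hL
  obtain ⟨w, hwL, hw⟩ := exists_mem_ne_zero_of_ne_bot hL₀
  have he : ‖(‖w‖⁻¹ : 𝕜) • w‖ = 1 := norm_smul_inv_norm (𝕜 := 𝕜) hw
  exact ⟨_, he, eq_span_singleton_of_mem_of_finrank_eq_one hL (L.smul_mem _ hwL)
    (norm_ne_zero_iff.mp (he ▸ one_ne_zero))⟩

theorem norm_inner_lt_one_of_span_singleton_ne {e f : E} (he : ‖e‖ = 1) (hf : ‖f‖ = 1)
    (hef : (𝕜 ∙ e) ≠ 𝕜 ∙ f) : ‖⟪e, f⟫_𝕜‖ < 1 := by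
  refine (norm_inner_le_norm e f).trans_eq (by rw [he, hf, one_mul]) |>.lt_of_ne fun h => hef ?_
  have he₀ : e ≠ 0 := norm_ne_zero_iff.mp (he ▸ one_ne_zero)
  have hf₀ : f ≠ 0 := norm_ne_zero_iff.mp (hf ▸ one_ne_zero)
  obtain ⟨r, hr, rfl⟩ := (norm_inner_eq_norm_iff he₀ hf₀).mp (by rw [h, he, hf, one_mul])
  exact (span_singleton_smul_eq (IsUnit.mk0 r hr) e).symm

theorem re_inner_lt_one_of_ne {e z : E} (he : ‖e‖ = 1) (hz : ‖z‖ = 1) (hne : z ≠ e) :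
    re ⟪e, z⟫_𝕜 < 1 := by
  have h := norm_sub_sq (𝕜 := 𝕜) e z
  have hpos : 0 < ‖e - z‖ := norm_pos_iff.mpr (sub_ne_zero.mpr hne.symm)
  rw [he, hz] at h
  nlinarith

theorem exists_norm_eq_one_inner_eq_zero_inner_eq_zero [FiniteDimensional 𝕜 E]
    (hE : 2 < finrank 𝕜 E) (x y : E) : ∃ u : E, ‖u‖ = 1 ∧ ⟪x, u⟫_𝕜 = 0 ∧ ⟪y, u⟫_𝕜 = 0 := by
  let K := span 𝕜 (Set.range ![x, y])
  have hK : Kᗮ ≠ ⊥ := by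
    intro h
    have hdim := finrank_add_finrank_orthogonal K
    have hK2 : finrank 𝕜 K ≤ 2 := finrank_range_le_card (R := 𝕜) ![x, y]
    rw [h, finrank_bot] at hdim
    omega
  obtain ⟨w, hwK, hw⟩ := exists_mem_ne_zero_of_ne_bot hK
  have hxy : x ∈ K ∧ y ∈ K := ⟨subset_span ⟨0, rfl⟩, subset_span ⟨1, rfl⟩⟩
  refine ⟨(‖w‖⁻¹ : 𝕜) • w, norm_smul_inv_norm hw, ?_, ?_⟩ <;>
    simp [inner_smul_right, inner_right_of_mem_orthogonal hxy.1 hwK,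
      inner_right_of_mem_orthogonal hxy.2 hwK]

theorem norm_smul_add_sqrt_smul_eq_one {e u : E} (he : ‖e‖ = 1) (hu : ‖u‖ = 1)
    (heu : ⟪e, u⟫_𝕜 = 0) {a : 𝕜} (ha : ‖a‖ ≤ 1) :
    ‖a • e + ((√(1 - ‖a‖ ^ 2) : ℝ) : 𝕜) • u‖ = 1 := by
  have h := norm_add_sq_eq_norm_sq_add_norm_sq_of_inner_eq_zero (a • e)
    (((√(1 - ‖a‖ ^ 2) : ℝ) : 𝕜) • u)
    (by rw [inner_smul_left, inner_smul_right, heu, mul_zero, mul_zero])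
  rw [norm_smul, norm_smul, he, hu, RCLike.norm_ofReal, abs_of_nonneg (Real.sqrt_nonneg _),
    mul_one, mul_one, Real.mul_self_sqrt (by nlinarith [norm_nonneg a])] at h
  nlinarith [norm_nonneg (a • e + ((√(1 - ‖a‖ ^ 2) : ℝ) : 𝕜) • u)]

theorem exists_norm_eq_one_inner_eq_le_re_inner {e f : E} (he : ‖e‖ = 1) (hf : ‖f‖ = 1)
    (hef : ‖⟪e, f⟫_𝕜‖ < 1) {c : 𝕜} (hc : ‖c‖ ≤ ‖⟪e, f⟫_𝕜‖) :
    ∃ z : E, ‖z‖ = 1 ∧ ⟪f, z⟫_𝕜 = c ∧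
      re (c * ⟪e, f⟫_𝕜) + (1 - ‖⟪e, f⟫_𝕜‖ ^ 2) ≤ re ⟪e, z⟫_𝕜 := by
  set α := ⟪e, f⟫_𝕜 with hα
  have hfe : ⟪f, e⟫_𝕜 = conj α := (inner_conj_symm f e).symm
  -- `z` is `c • f` plus the largest admissible multiple of the direction `v` of
  -- the component `q` of `e` orthogonal to `f`.
  set q := e - conj α • f
  have hfq : ⟪f, q⟫_𝕜 = 0 := by simp [q, inner_sub_right, inner_smul_right, hf, hfe]
  have hq : ‖q‖ ^ 2 = 1 - ‖α‖ ^ 2 := by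
    have h := norm_add_sq_eq_norm_sq_add_norm_sq_of_inner_eq_zero q (conj α • f)
      (by rw [inner_smul_right, ← inner_conj_symm, hfq, map_zero, mul_zero])
    rw [sub_add_cancel, he, norm_smul, RCLike.norm_conj, hf] at h
    nlinarith
  have hq₀ : 0 < ‖q‖ := by nlinarith [norm_nonneg q, norm_nonneg α]
  set v := (‖q‖⁻¹ : 𝕜) • q
  have hv : ‖v‖ = 1 := norm_smul_inv_norm (norm_pos_iff.mp hq₀)
  have hfv : ⟪f, v⟫_𝕜 = 0 := by simp [v, inner_smul_right, hfq]
  have heq : ⟪e, q⟫_𝕜 = ((‖q‖ ^ 2 : ℝ) : 𝕜) := by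
    simp [q, inner_sub_right, inner_smul_right, he, ← hα, RCLike.conj_mul, hq]
  have hev : ⟪e, v⟫_𝕜 = ‖q‖ := by
    rw [inner_smul_right, heq]
    push_cast
    field_simp
  set t := √(1 - ‖c‖ ^ 2)
  have ht : ‖q‖ ≤ t := Real.le_sqrt_of_sq_le (by nlinarith [norm_nonneg c])
  refine ⟨c • f + (t : 𝕜) • v, norm_smul_add_sqrt_smul_eq_one hf hv hfv (hc.trans hef.le),
    by simp [inner_add_right, inner_smul_right, hfv, hf], ?_⟩
  rw [inner_add_right, inner_smul_right, inner_smul_right, hev, ← hα, map_add, ← ofReal_mul,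
    ofReal_re, ← hq]
  nlinarith [mul_le_mul_of_nonneg_right ht hq₀.le]

theorem exists_re_inner_gt_via_two_axes [FiniteDimensional 𝕜 E] (hE : 2 < finrank 𝕜 E)
    {e f : E} (he : ‖e‖ = 1) (hf : ‖f‖ = 1) (hef : ‖⟪e, f⟫_𝕜‖ < 1) {a : 𝕜} (ha : ‖a‖ ≤ 1)
    (ha₁ : re a < 1) :
    ∃ z₁ z₂ : E, ‖z₁‖ = 1 ∧ ⟪e, z₁⟫_𝕜 = a ∧ ‖z₂‖ = 1 ∧ ⟪f, z₂⟫_𝕜 = ⟪f, z₁⟫_𝕜 ∧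
      re a < re ⟪e, z₂⟫_𝕜 := by
  set α := ⟪e, f⟫_𝕜
  have hfe : ⟪f, e⟫_𝕜 = conj α := (inner_conj_symm f e).symm
  -- `z₁` has no component along `f` beyond the one forced by its `e`-component.
  obtain ⟨u, hu, heu, hfu⟩ := exists_norm_eq_one_inner_eq_zero_inner_eq_zero hE e f
  set z₁ := a • e + ((√(1 - ‖a‖ ^ 2) : ℝ) : 𝕜) • u
  have hz₁ : ‖z₁‖ = 1 := norm_smul_add_sqrt_smul_eq_one he hu heu ha
  have hez₁ : ⟪e, z₁⟫_𝕜 = a := by simp [z₁, inner_add_right, inner_smul_right, heu, he]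
  have hfz₁ : ⟪f, z₁⟫_𝕜 = conj α * a := by
    simp [z₁, inner_add_right, inner_smul_right, hfu, hfe, mul_comm]
  have hc : ‖conj α * a‖ ≤ ‖α‖ := by
    simpa [norm_mul] using mul_le_of_le_one_right (norm_nonneg α) ha
  obtain ⟨z₂, hz₂, hfz₂, hle⟩ := exists_norm_eq_one_inner_eq_le_re_inner he hf hef hc
  refine ⟨z₁, z₂, hz₁, hez₁, hz₂, hfz₂.trans hfz₁.symm, ?_⟩
  have hre : re (conj α * a * α) = ‖α‖ ^ 2 * re a := by
    rw [mul_right_comm, RCLike.conj_mul, ← ofReal_pow, re_ofReal_mul]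
  rw [hre] at hle
  nlinarith [mul_pos (sub_pos.mpr (pow_lt_one₀ (norm_nonneg α) hef two_ne_zero)) (sub_pos.mpr ha₁)]

end InnerProductSpace

section RotGroup

open Matrix.UnitaryGroup (toLinearIsometryEquiv toLinearIsometryEquiv_apply)

variable {n : ℕ}

theorem mem_rotGroup_span_singleton {e : Cn n} {g : Matrix.unitaryGroup (Fin n) ℂ} :
    g ∈ rotGroup (ℂ ∙ e) ↔
      (g : Matrix (Fin n) (Fin n) ℂ).det = 1 ∧ toLinearIsometryEquiv g e = e := by
  refine and_congr_right fun _ => ⟨fun h => h e (mem_span_singleton_self e), fun h x hx => ?_⟩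
  obtain ⟨c, rfl⟩ := mem_span_singleton.mp hx
  exact (map_smul (toLinearIsometryEquiv g) c e).trans (congrArg (c • ·) h)

theorem exists_mem_rotGroup_apply_eq_of_inner_eq_zero (hn : 3 ≤ n) {e w₁ w₂ : Cn n}
    (he : ‖e‖ = 1) (h₁ : ⟪e, w₁⟫_ℂ = 0) (h₂ : ⟪e, w₂⟫_ℂ = 0) (hw : ‖w₁‖ = ‖w₂‖) :
    ∃ g ∈ rotGroup (ℂ ∙ e), toLinearIsometryEquiv g w₁ = w₂ := by
  rcases eq_or_ne w₁ 0 with rfl | hw₁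
  · refine ⟨1, mem_rotGroup_span_singleton.mpr ⟨by simp, by simp⟩, ?_⟩
    rw [norm_zero, eq_comm, norm_eq_zero] at hw
    simp [hw]
  have hw₂ : w₂ ≠ 0 := norm_ne_zero_iff.mp (hw ▸ norm_ne_zero_iff.mpr hw₁)
  have hbasis : ∀ w : Cn n, w ≠ 0 → ⟪e, w⟫_ℂ = 0 → ∃ b : OrthonormalBasis (Fin n) ℂ (Cn n),
      b ⟨0, by omega⟩ = e ∧ b ⟨1, by omega⟩ = (‖w‖⁻¹ : ℂ) • w := fun w hw hew =>
    Orthonormal.exists_orthonormalBasis_apply_eq_apply_eq (by simp) (by simp)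
      (by simpa [he, inner_smul_right, hew] using norm_smul_inv_norm (𝕜 := ℂ) hw)
  obtain ⟨b₁, hb₁e, hb₁w⟩ := hbasis w₁ hw₁ h₁
  obtain ⟨b₂, hb₂e, hb₂w⟩ := hbasis w₂ hw₂ h₂
  obtain ⟨g, hdet, hg⟩ := Matrix.UnitaryGroup.exists_detHom_eq_one_apply_eq b₁ b₂ ⟨2, hn⟩
  refine ⟨g, mem_rotGroup_span_singleton.mpr ⟨congrArg Subtype.val hdet, ?_⟩, ?_⟩
  · simpa [hb₁e, hb₂e] using hg ⟨0, by omega⟩ (by simp)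
  · have h := hg ⟨1, by omega⟩ (by simp)
    rw [hb₁w, hb₂w, map_smul, hw, smul_right_inj (by simpa using hw₂)] at h
    exact h

theorem exists_mem_rotGroup_apply_eq (hn : 3 ≤ n) {e z₁ z₂ : Cn n} (he : ‖e‖ = 1)
    (hz : ‖z₁‖ = ‖z₂‖) (h : ⟪e, z₁⟫_ℂ = ⟪e, z₂⟫_ℂ) :
    ∃ g ∈ rotGroup (ℂ ∙ e), toLinearIsometryEquiv g z₁ = z₂ := by
  set a := ⟪e, z₁⟫_ℂ
  have horth : ∀ z : Cn n, ⟪e, z⟫_ℂ = a → ⟪e, z - a • e⟫_ℂ = 0 := fun z hz => by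
    rw [inner_sub_right, inner_smul_right, inner_self_eq_one_of_norm_eq_one he, hz, mul_one,
      sub_self]
  have hnorm : ∀ z : Cn n, ⟪e, z⟫_ℂ = a →
      ‖z‖ * ‖z‖ = ‖a • e‖ * ‖a • e‖ + ‖z - a • e‖ * ‖z - a • e‖ := fun z hz => by
    simpa using norm_add_sq_eq_norm_sq_add_norm_sq_of_inner_eq_zero (a • e) (z - a • e)
      (by rw [inner_smul_left, horth z hz, mul_zero])
  have hw : ‖z₁ - a • e‖ = ‖z₂ - a • e‖ := by
    have h₁ := hnorm z₁ rfl
    have h₂ := hnorm z₂ h.symm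
    rw [hz] at h₁
    exact (mul_self_inj (norm_nonneg _) (norm_nonneg _)).mp (by linarith)
  obtain ⟨g, hg, hgw⟩ := exists_mem_rotGroup_apply_eq_of_inner_eq_zero hn he
    (horth z₁ rfl) (horth z₂ h.symm) hw
  refine ⟨g, hg, ?_⟩
  have hge := (mem_rotGroup_span_singleton.mp hg).2
  rw [map_sub, map_smul, hge, sub_left_inj] at hgw
  exact hgw

theorem exists_mem_apply_eq_of_isCompact (hn : 3 ≤ n) {e f : Cn n} (he : ‖e‖ = 1)
    (hf : ‖f‖ = 1) (hef : ‖⟪e, f⟫_ℂ‖ < 1) {G : Subgroup (Matrix.unitaryGroup (Fin n) ℂ)}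
    (hcomp : IsCompact (G : Set (Matrix.unitaryGroup (Fin n) ℂ)))
    (hG₁ : rotGroup (ℂ ∙ e) ⊆ G) (hG₂ : rotGroup (ℂ ∙ f) ⊆ G) {x : Cn n} (hx : ‖x‖ = 1) :
    ∃ g ∈ G, toLinearIsometryEquiv g x = e := by
  have hcont : Continuous fun g : Matrix.unitaryGroup (Fin n) ℂ =>
      re ⟪e, toLinearIsometryEquiv g x⟫_ℂ := by
    simp only [toLinearIsometryEquiv_apply]
    fun_prop
  obtain ⟨g₀, hg₀, hmax⟩ := hcomp.exists_isMaxOn ⟨1, G.one_mem⟩ hcont.continuousOn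
  set z₀ := toLinearIsometryEquiv g₀ x
  have hz₀ : ‖z₀‖ = 1 := by simp [z₀, hx]
  refine ⟨g₀, hg₀, by_contra fun hne => ?_⟩
  have ha : ‖⟪e, z₀⟫_ℂ‖ ≤ 1 := (norm_inner_le_norm e z₀).trans_eq (by rw [he, hz₀, one_mul])
  obtain ⟨z₁, z₂, hz₁, hez₁, hz₂, hfz, hlt⟩ := exists_re_inner_gt_via_two_axes
    (by simp; omega) he hf hef ha (re_inner_lt_one_of_ne he hz₀ hne)
  obtain ⟨g₁, hg₁, rfl⟩ := exists_mem_rotGroup_apply_eq hn he (hz₀.trans hz₁.symm) hez₁.symm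
  obtain ⟨g₂, hg₂, rfl⟩ := exists_mem_rotGroup_apply_eq hn hf (hz₁.trans hz₂.symm) hfz.symm
  refine hlt.not_ge ?_
  simpa [z₀] using hmax (G.mul_mem (G.mul_mem (hG₂ hg₂) (hG₁ hg₁)) hg₀)

end RotGroup

theorem stmt4_general {n : ℕ} (hn : 3 ≤ n)
    (L₁ L₂ : Submodule ℂ (Cn n))
    (h₁ : Module.finrank ℂ L₁ = 1) (h₂ : Module.finrank ℂ L₂ = 1) (hne : L₁ ≠ L₂)
    (G : Subgroup (Matrix.unitaryGroup (Fin n) ℂ))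
    (hcomp : IsCompact (G : Set (Matrix.unitaryGroup (Fin n) ℂ)))
    (hG₁ : rotGroup L₁ ⊆ (G : Set (Matrix.unitaryGroup (Fin n) ℂ)))
    (hG₂ : rotGroup L₂ ⊆ (G : Set (Matrix.unitaryGroup (Fin n) ℂ))) :
    ∀ x y : Cn n, ‖x‖ = 1 → ‖y‖ = 1 →
      ∃ g ∈ G, (WithLp.toLp 2 (Matrix.mulVec (g : Matrix (Fin n) (Fin n) ℂ) x) : Cn n) = y := by
  obtain ⟨e, he, rfl⟩ := exists_norm_eq_one_eq_span_singleton h₁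
  obtain ⟨f, hf, rfl⟩ := exists_norm_eq_one_eq_span_singleton h₂
  have hef := norm_inner_lt_one_of_span_singleton_ne he hf hne
  intro x y hx hy
  obtain ⟨gx, hgx, hxe⟩ := exists_mem_apply_eq_of_isCompact hn he hf hef hcomp hG₁ hG₂ hx
  obtain ⟨gy, hgy, hye⟩ := exists_mem_apply_eq_of_isCompact hn he hf hef hcomp hG₁ hG₂ hy
  refine ⟨gy⁻¹ * gx, G.mul_mem (G.inv_mem hgy) hgx, ?_⟩
  rw [← Matrix.UnitaryGroup.toLinearIsometryEquiv_apply, map_mul, map_inv]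
  simp [hxe, ← hye]

/-- Any compact subgroup of `SU(n)`, `n ≥ 3`, containing the complex rotation groups
around two distinct complex lines acts transitively on the unit sphere `S^{2n-1}`. -/
theorem stmt4 {n : ℕ} (hn : 3 ≤ n)
    (L₁ L₂ : Submodule ℂ (Cn n))
    (h₁ : Module.finrank ℂ L₁ = 1) (h₂ : Module.finrank ℂ L₂ = 1) (hne : L₁ ≠ L₂)
    (G : Subgroup (Matrix.unitaryGroup (Fin n) ℂ))
    (hSU : ∀ g ∈ G, (g : Matrix (Fin n) (Fin n) ℂ).det = 1)
    (hcomp : IsCompact (G : Set (Matrix.unitaryGroup (Fin n) ℂ)))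
    (hG₁ : rotGroup L₁ ⊆ (G : Set (Matrix.unitaryGroup (Fin n) ℂ)))
    (hG₂ : rotGroup L₂ ⊆ (G : Set (Matrix.unitaryGroup (Fin n) ℂ))) :
    ∀ x y : Cn n, ‖x‖ = 1 → ‖y‖ = 1 →
      ∃ g ∈ G, (WithLp.toLp 2 (Matrix.mulVec (g : Matrix (Fin n) (Fin n) ℂ) x) : Cn n) = y :=
  stmt4_general hn L₁ L₂ h₁ h₂ hne G hcomp hG₁ hG₂
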